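/- arXiv:2508.08057 — 2 statements merged into one kernel-verified Lean document; each statement's English description precedes it below -/
import Mathlib

section
/- For each k ∈ ℤ, the linear map D_k : A_ω^δ → A_ω^δ defined by D_k(L_r) = L_{r+k} and D_k(M_r) = M_{r+k} is a 1/3-derivation of A_ω^δ, i.e., D_k([x,y,z]) = (1/3)([D_k(x),y,z] + [x,D_k(y),z] + [x,y,D_k(z)]) for all x,y,z. -/
/-- The underlying space of `A_ω^δ`: formal ℂ-linear combinations of basis
elements indexed by `Bool × ℤ` (`(false, r)` is `L_r`, `(true, r)` is `M_r`). -/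
abbrev Aod : Type := (Bool × ℤ) →₀ ℂ

/-- Basis element `L_r`. -/
noncomputable def Lb (r : ℤ) : Aod := Finsupp.single (false, r) 1
/-- Basis element `M_r`. -/
noncomputable def Mb (r : ℤ) : Aod := Finsupp.single (true, r) 1

/-- Structure constants of `A_ω^δ`: the alternating trilinear extension of
`[L_r,L_s,M_t] = (s-r) L_{r+s+t}`, `[L_r,M_s,M_t] = (s-t) M_{r+s+t}`,
`[L_r,L_s,L_t] = [M_r,M_s,M_t] = 0`. -/
noncomputable def sc : Bool × ℤ → Bool × ℤ → Bool × ℤ → Aod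
  | (false, r), (false, s), (true, t) => ((s - r : ℤ) : ℂ) • Lb (r + s + t)
  | (false, r), (true, s), (false, t) => ((r - t : ℤ) : ℂ) • Lb (r + s + t)
  | (true, r), (false, s), (false, t) => ((t - s : ℤ) : ℂ) • Lb (r + s + t)
  | (false, r), (true, s), (true, t) => ((s - t : ℤ) : ℂ) • Mb (r + s + t)
  | (true, r), (false, s), (true, t) => ((t - r : ℤ) : ℂ) • Mb (r + s + t)
  | (true, r), (true, s), (false, t) => ((r - s : ℤ) : ℂ) • Mb (r + s + t)
  | _, _, _ => 0

/-- The 3-Lie bracket of `A_ω^δ`, extended trilinearly from the structure constants. -/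
noncomputable def br (x y z : Aod) : Aod :=
  x.sum fun a ca => y.sum fun b cb => z.sum fun c cc => (ca * cb * cc) • sc a b c

/-- The shift operator `D_k` with `D_k(L_r) = L_{r+k}` and `D_k(M_r) = M_{r+k}`. -/
noncomputable def Dk (k : ℤ) : Aod →ₗ[ℂ] Aod :=
  Finsupp.lmapDomain ℂ ℂ (fun p : Bool × ℤ => (p.1, p.2 + k))

lemma Dk_single (k : ℤ) (p : Bool × ℤ) (v : ℂ) :
    Dk k (Finsupp.single p v) = Finsupp.single (p.1, p.2 + k) v := by
  simp [Dk, Finsupp.lmapDomain, Finsupp.mapDomain_single]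

lemma key (k : ℤ) (a b c : Bool × ℤ) :
    Dk k (sc a b c) =
      (3⁻¹ : ℂ) • (sc (a.1, a.2 + k) b c + sc a (b.1, b.2 + k) c + sc a b (c.1, c.2 + k)) := by
  obtain ⟨ea, r⟩ := a; obtain ⟨eb, s⟩ := b; obtain ⟨ec, t⟩ := c
  cases ea <;> cases eb <;> cases ec <;>
    simp only [sc, Lb, Mb, map_smul, Dk_single, map_zero, smul_zero, add_zero, zero_add] <;>
  first
  | rfl
  | · rw [show r + k + s + t = r + s + t + k from by ring,
        show r + (s + k) + t = r + s + t + k from by ring,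
        show r + s + (t + k) = r + s + t + k from by ring]
      push_cast
      module

lemma br_single (a b c : Bool × ℤ) (ca cb cc : ℂ) :
    br (Finsupp.single a ca) (Finsupp.single b cb) (Finsupp.single c cc) =
      (ca * cb * cc) • sc a b c := by
  unfold br
  rw [Finsupp.sum_single_index (by simp), Finsupp.sum_single_index (by simp),
    Finsupp.sum_single_index (by simp)]

lemma br_zero_left (y z : Aod) : br 0 y z = 0 := by simp [br]
lemma br_zero_mid (x z : Aod) : br x 0 z = 0 := by simp [br]
lemma br_zero_right (x y : Aod) : br x y 0 = 0 := by simp [br]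

lemma br_add_left (x x' y z : Aod) : br (x + x') y z = br x y z + br x' y z := by
  unfold br
  rw [Finsupp.sum_add_index (by simp) (by intros; simp [add_mul, add_smul, Finsupp.sum_add])]

lemma br_add_mid (x y y' z : Aod) : br x (y + y') z = br x y z + br x y' z := by
  unfold br
  rw [← Finsupp.sum_add]
  refine Finsupp.sum_congr fun a _ => ?_
  rw [Finsupp.sum_add_index (by simp)
    (by intros; simp [mul_add, add_mul, add_smul, Finsupp.sum_add])]

lemma br_add_right (x y z z' : Aod) : br x y (z + z') = br x y z + br x y z' := by
  unfold br
  rw [← Finsupp.sum_add]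
  refine Finsupp.sum_congr fun a _ => ?_
  rw [← Finsupp.sum_add]
  refine Finsupp.sum_congr fun b _ => ?_
  rw [Finsupp.sum_add_index (by simp) (by intros; simp [mul_add, add_smul])]

lemma main_single (k : ℤ) (a b c : Bool × ℤ) (ca cb cc : ℂ) :
    Dk k (br (Finsupp.single a ca) (Finsupp.single b cb) (Finsupp.single c cc)) =
      (3⁻¹ : ℂ) • (br (Dk k (Finsupp.single a ca)) (Finsupp.single b cb) (Finsupp.single c cc)
        + br (Finsupp.single a ca) (Dk k (Finsupp.single b cb)) (Finsupp.single c cc)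
        + br (Finsupp.single a ca) (Finsupp.single b cb) (Dk k (Finsupp.single c cc))) := by
  rw [br_single, map_smul, key, Dk_single, Dk_single, Dk_single, br_single, br_single, br_single,
    smul_comm]
  module

lemma step_z (k : ℤ) (a b : Bool × ℤ) (ca cb : ℂ) (z : Aod) :
    Dk k (br (Finsupp.single a ca) (Finsupp.single b cb) z) =
      (3⁻¹ : ℂ) • (br (Dk k (Finsupp.single a ca)) (Finsupp.single b cb) z
        + br (Finsupp.single a ca) (Dk k (Finsupp.single b cb)) z
        + br (Finsupp.single a ca) (Finsupp.single b cb) (Dk k z)) := by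
  induction z using Finsupp.induction with
  | zero => simp [br_zero_right]
  | single_add c cc f _ _ ih =>
      rw [br_add_right, map_add, map_add, ih, main_single, br_add_right, br_add_right,
        br_add_right]
      module

lemma step_y (k : ℤ) (a : Bool × ℤ) (ca : ℂ) (y z : Aod) :
    Dk k (br (Finsupp.single a ca) y z) =
      (3⁻¹ : ℂ) • (br (Dk k (Finsupp.single a ca)) y z
        + br (Finsupp.single a ca) (Dk k y) z
        + br (Finsupp.single a ca) y (Dk k z)) := by
  induction y using Finsupp.induction with
  | zero => simp [br_zero_mid]
  | single_add b cb f _ _ ih =>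
      rw [br_add_mid, map_add, map_add, ih, step_z, br_add_mid, br_add_mid, br_add_mid]
      module

/-- Each `D_k` is a 1/3-derivation of `A_ω^δ`. -/
theorem Dk_is_one_third_derivation (k : ℤ) :
    (∀ r : ℤ, Dk k (Lb r) = Lb (r + k)) ∧
    (∀ r : ℤ, Dk k (Mb r) = Mb (r + k)) ∧
    (∀ x y z : Aod, Dk k (br x y z) =
      (3⁻¹ : ℂ) • (br (Dk k x) y z + br x (Dk k y) z + br x y (Dk k z))) := by
  refine ⟨fun r => by simp [Lb, Dk_single], fun r => by simp [Mb, Dk_single], fun x y z => ?_⟩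
  induction x using Finsupp.induction with
  | zero => simp [br_zero_left]
  | single_add a ca f _ _ ih =>
      rw [br_add_left, map_add, map_add, ih, step_y, br_add_left, br_add_left, br_add_left]
      module
end

section
/- The 3-Lie algebra A_ω^δ admits only trivial transposed Poisson structures: if · is a commutative associative multiplication on A_ω^δ such that 3u·[x,y,z] = [u·x,y,z] + [x,u·y,z] + [x,y,u·z] for all u,x,y,z, then x·y = 0 for all x, y ∈ A_ω^δ. -/
lemma br_eq_sum (x : Aod) (b c : Bool × ℤ) :
    br x (Finsupp.single b 1) (Finsupp.single c 1) = x.sum fun a ca => ca • sc a b c := by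
  unfold br
  refine Finsupp.sum_congr fun a _ => ?_
  rw [Finsupp.sum_single_index (by simp)]
  rw [Finsupp.sum_single_index (by simp)]
  simp

lemma sum_delta (x : Aod) (F : Bool × ℤ → ℂ) (a0 : Bool × ℤ)
    (hF : ∀ a, a ≠ a0 → F a = 0) :
    (x.sum fun a ca => ca * F a) = x a0 * F a0 := by
  classical
  rw [Finsupp.sum_congr (g2 := fun a ca => if a = a0 then ca * F a0 else 0) ?_]
  · rw [Finsupp.sum_ite_eq']
    split_ifs with h
    · rfl
    · rw [Finsupp.notMem_support_iff.mp h, zero_mul]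
  · intro a _
    split_ifs with h
    · subst h; rfl
    · rw [hF a h, mul_zero]

lemma br_apply (x : Aod) (b c p : Bool × ℤ) :
    (br x (Finsupp.single b 1) (Finsupp.single c 1)) p = x.sum fun a ca => ca * (sc a b c p) := by
  rw [br_eq_sum, Finsupp.sum_apply]
  simp only [Finsupp.smul_apply, smul_eq_mul]

-- config 1 : br x (Lb s) (Mb t)
lemma cf1L (x : Aod) (s t m : ℤ) :
    (br x (Lb s) (Mb t)) (false, m) = ((2*s+t-m : ℤ) : ℂ) * x (false, m-s-t) := by
  simp only [Lb, Mb]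
  rw [br_apply, sum_delta _ _ (false, m-s-t)]
  · have : (m-s-t) + s + t = m := by ring
    simp only [sc, Lb, Finsupp.smul_apply, smul_eq_mul, Finsupp.single_apply, this,
      if_pos rfl]
    push_cast
    ring
  · rintro ⟨ab, k⟩ hne
    cases ab
    · have hk : k ≠ m - s - t := by
        intro h; exact hne (by rw [h])
      simp only [sc, Lb, Finsupp.smul_apply, Finsupp.single_apply, smul_eq_mul]
      rw [if_neg (by simp; omega), mul_zero]
    · simp [sc, Mb, Finsupp.single_apply]

lemma cf1M (x : Aod) (s t m : ℤ) :
    (br x (Lb s) (Mb t)) (true, m) = ((s+2*t-m : ℤ) : ℂ) * x (true, m-s-t) := by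
  simp only [Lb, Mb]
  rw [br_apply, sum_delta _ _ (true, m-s-t)]
  · have : (m-s-t) + s + t = m := by ring
    simp only [sc, Mb, Finsupp.smul_apply, smul_eq_mul, Finsupp.single_apply, this,
      if_pos rfl]
    push_cast
    ring
  · rintro ⟨ab, k⟩ hne
    cases ab
    · simp [sc, Lb, Finsupp.single_apply]
    · have hk : k ≠ m - s - t := by
        intro h; exact hne (by rw [h])
      simp only [sc, Mb, Finsupp.smul_apply, Finsupp.single_apply, smul_eq_mul]
      rw [if_neg (by simp; omega), mul_zero]

lemma br_apply2 (a : Bool × ℤ) (y : Aod) (c p : Bool × ℤ) :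
    (br (Finsupp.single a 1) y (Finsupp.single c 1)) p
      = y.sum fun b cb => cb * (sc a b c p) := by
  unfold br
  rw [Finsupp.sum_single_index (by simp)]
  rw [Finsupp.sum_apply]
  refine Finsupp.sum_congr fun b _ => ?_
  rw [Finsupp.sum_single_index (by simp)]
  simp

lemma br_apply3 (a b : Bool × ℤ) (z : Aod) (p : Bool × ℤ) :
    (br (Finsupp.single a 1) (Finsupp.single b 1) z) p
      = z.sum fun c cc => cc * (sc a b c p) := by
  unfold br
  rw [Finsupp.sum_single_index (by simp), Finsupp.sum_single_index (by simp)]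
  rw [Finsupp.sum_apply]
  refine Finsupp.sum_congr fun cI _ => ?_
  simp

-- config 2 : br (Lb r) x (Mb t)
lemma cf2L (x : Aod) (r t m : ℤ) :
    (br (Lb r) x (Mb t)) (false, m) = ((m-2*r-t : ℤ) : ℂ) * x (false, m-r-t) := by
  simp only [Lb, Mb]
  rw [br_apply2, sum_delta _ _ (false, m-r-t)]
  · have : r + (m-r-t) + t = m := by ring
    simp only [sc, Lb, Finsupp.smul_apply, smul_eq_mul, Finsupp.single_apply, this,
      if_pos rfl]
    push_cast
    ring
  · rintro ⟨ab, k⟩ hne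
    cases ab
    · have hk : k ≠ m - r - t := by
        intro h; exact hne (by rw [h])
      simp only [sc, Lb, Finsupp.smul_apply, Finsupp.single_apply, smul_eq_mul]
      rw [if_neg (by simp; omega), mul_zero]
    · simp [sc, Mb, Finsupp.single_apply]

lemma cf2M (x : Aod) (r t m : ℤ) :
    (br (Lb r) x (Mb t)) (true, m) = ((m-r-2*t : ℤ) : ℂ) * x (true, m-r-t) := by
  simp only [Lb, Mb]
  rw [br_apply2, sum_delta _ _ (true, m-r-t)]
  · have : r + (m-r-t) + t = m := by ring
    simp only [sc, Mb, Finsupp.smul_apply, smul_eq_mul, Finsupp.single_apply, this,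
      if_pos rfl]
    push_cast
    ring
  · rintro ⟨ab, k⟩ hne
    cases ab
    · simp [sc, Lb, Finsupp.single_apply]
    · have hk : k ≠ m - r - t := by
        intro h; exact hne (by rw [h])
      simp only [sc, Mb, Finsupp.smul_apply, Finsupp.single_apply, smul_eq_mul]
      rw [if_neg (by simp; omega), mul_zero]

-- config 3 : br (Lb r) (Lb s) x
lemma cf3L (x : Aod) (r s m : ℤ) :
    (br (Lb r) (Lb s) x) (false, m) = ((s-r : ℤ) : ℂ) * x (true, m-r-s) := by
  simp only [Lb, Mb]
  rw [br_apply3, sum_delta _ _ (true, m-r-s)]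
  · have : r + s + (m-r-s) = m := by ring
    simp only [sc, Lb, Finsupp.smul_apply, smul_eq_mul, Finsupp.single_apply, this,
      if_pos rfl]
    push_cast
    ring
  · rintro ⟨ab, k⟩ hne
    cases ab
    · simp [sc]
    · have hk : k ≠ m - r - s := by
        intro h; exact hne (by rw [h])
      simp only [sc, Lb, Finsupp.smul_apply, Finsupp.single_apply, smul_eq_mul]
      rw [if_neg (by simp; omega), mul_zero]

lemma cf3M (x : Aod) (r s m : ℤ) :
    (br (Lb r) (Lb s) x) (true, m) = 0 := by
  simp only [Lb, Mb]
  rw [br_apply3, sum_delta _ _ (true, 0)]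
  · simp [sc, Lb, Finsupp.single_apply]
  · rintro ⟨ab, k⟩ hne
    cases ab
    · simp [sc]
    · simp [sc, Lb, Finsupp.single_apply]

-- config 4 : br x (Mb s) (Mb t)
lemma cf4L (x : Aod) (s t m : ℤ) :
    (br x (Mb s) (Mb t)) (false, m) = 0 := by
  simp only [Lb, Mb]
  rw [br_apply, sum_delta _ _ (true, 0)]
  · simp [sc, Mb, Finsupp.single_apply]
  · rintro ⟨ab, k⟩ hne
    cases ab
    · simp [sc, Mb, Finsupp.single_apply]
    · simp [sc]

lemma cf4M (x : Aod) (s t m : ℤ) :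
    (br x (Mb s) (Mb t)) (true, m) = ((s-t : ℤ) : ℂ) * x (false, m-s-t) := by
  simp only [Lb, Mb]
  rw [br_apply, sum_delta _ _ (false, m-s-t)]
  · have : (m-s-t) + s + t = m := by ring
    simp only [sc, Mb, Finsupp.smul_apply, smul_eq_mul, Finsupp.single_apply, this,
      if_pos rfl]
    push_cast
    ring
  · rintro ⟨ab, k⟩ hne
    cases ab
    · have hk : k ≠ m - s - t := by
        intro h; exact hne (by rw [h])
      simp only [sc, Mb, Finsupp.smul_apply, Finsupp.single_apply, smul_eq_mul]
      rw [if_neg (by simp; omega), mul_zero]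
    · simp [sc]

-- config 5 : br (Lb r) (Mb s) x
lemma cf5L (x : Aod) (r s m : ℤ) :
    (br (Lb r) (Mb s) x) (false, m) = ((2*r+s-m : ℤ) : ℂ) * x (false, m-r-s) := by
  simp only [Lb, Mb]
  rw [br_apply3, sum_delta _ _ (false, m-r-s)]
  · have : r + s + (m-r-s) = m := by ring
    simp only [sc, Lb, Finsupp.smul_apply, smul_eq_mul, Finsupp.single_apply, this,
      if_pos rfl]
    push_cast
    ring
  · rintro ⟨ab, k⟩ hne
    cases ab
    · have hk : k ≠ m - r - s := by
        intro h; exact hne (by rw [h])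
      simp only [sc, Lb, Finsupp.smul_apply, Finsupp.single_apply, smul_eq_mul]
      rw [if_neg (by simp; omega), mul_zero]
    · simp [sc, Mb, Finsupp.single_apply]

lemma cf5M (x : Aod) (r s m : ℤ) :
    (br (Lb r) (Mb s) x) (true, m) = ((r+2*s-m : ℤ) : ℂ) * x (true, m-r-s) := by
  simp only [Lb, Mb]
  rw [br_apply3, sum_delta _ _ (true, m-r-s)]
  · have : r + s + (m-r-s) = m := by ring
    simp only [sc, Mb, Finsupp.smul_apply, smul_eq_mul, Finsupp.single_apply, this,
      if_pos rfl]
    push_cast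
    ring
  · rintro ⟨ab, k⟩ hne
    cases ab
    · simp [sc, Lb, Finsupp.single_apply]
    · have hk : k ≠ m - r - s := by
        intro h; exact hne (by rw [h])
      simp only [sc, Mb, Finsupp.smul_apply, Finsupp.single_apply, smul_eq_mul]
      rw [if_neg (by simp; omega), mul_zero]

-- brackets of basis elements
lemma br_LLM (r s t : ℤ) :
    br (Lb r) (Lb s) (Mb t) = ((s-r : ℤ) : ℂ) • Lb (r+s+t) := by
  unfold br Lb Mb
  rw [Finsupp.sum_single_index (by simp), Finsupp.sum_single_index (by simp),
    Finsupp.sum_single_index (by simp)]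
  simp [sc, Lb]

lemma br_LMM (r s t : ℤ) :
    br (Lb r) (Mb s) (Mb t) = ((s-t : ℤ) : ℂ) • Mb (r+s+t) := by
  unfold br Lb Mb
  rw [Finsupp.sum_single_index (by simp), Finsupp.sum_single_index (by simp),
    Finsupp.sum_single_index (by simp)]
  simp [sc, Mb]

section Elems
variable (φ : Aod →ₗ[ℂ] Aod)
  (hφ : ∀ x y z, (3 : ℂ) • φ (br x y z) = br (φ x) y z + br x (φ y) z + br x y (φ z))

include hφ

lemma E1 (r s t m : ℤ) :
    3 * ((s-r:ℤ):ℂ) * (φ (Lb (r+s+t))) (true, m)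
      = ((s+2*t-m:ℤ):ℂ) * (φ (Lb r)) (true, m-s-t)
        + ((m-r-2*t:ℤ):ℂ) * (φ (Lb s)) (true, m-r-t) := by
  have h := congrArg (fun f : Aod => f (true, m)) (hφ (Lb r) (Lb s) (Mb t))
  simp only [br_LLM, map_smul, Finsupp.smul_apply, Finsupp.add_apply, smul_eq_mul,
    cf1M, cf2M, cf3M] at h
  linear_combination h

lemma E4 (r s t m : ℤ) :
    3 * ((s-r:ℤ):ℂ) * (φ (Lb (r+s+t))) (false, m)
      = ((2*s+t-m:ℤ):ℂ) * (φ (Lb r)) (false, m-s-t)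
        + ((m-2*r-t:ℤ):ℂ) * (φ (Lb s)) (false, m-r-t)
        + ((s-r:ℤ):ℂ) * (φ (Mb t)) (true, m-r-s) := by
  have h := congrArg (fun f : Aod => f (false, m)) (hφ (Lb r) (Lb s) (Mb t))
  simp only [br_LLM, map_smul, Finsupp.smul_apply, Finsupp.add_apply, smul_eq_mul,
    cf1L, cf2L, cf3L] at h
  linear_combination h

lemma E2 (r s t m : ℤ) :
    3 * ((s-t:ℤ):ℂ) * (φ (Mb (r+s+t))) (false, m)
      = ((m-2*r-t:ℤ):ℂ) * (φ (Mb s)) (false, m-r-t)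
        + ((2*r+s-m:ℤ):ℂ) * (φ (Mb t)) (false, m-r-s) := by
  have h := congrArg (fun f : Aod => f (false, m)) (hφ (Lb r) (Mb s) (Mb t))
  simp only [br_LMM, map_smul, Finsupp.smul_apply, Finsupp.add_apply, smul_eq_mul,
    cf4L, cf2L, cf5L] at h
  linear_combination h

lemma E3 (r s t m : ℤ) :
    3 * ((s-t:ℤ):ℂ) * (φ (Mb (r+s+t))) (true, m)
      = ((s-t:ℤ):ℂ) * (φ (Lb r)) (false, m-s-t)
        + ((m-r-2*t:ℤ):ℂ) * (φ (Mb s)) (true, m-r-t)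
        + ((r+2*s-m:ℤ):ℂ) * (φ (Mb t)) (true, m-r-s) := by
  have h := congrArg (fun f : Aod => f (true, m)) (hφ (Lb r) (Mb s) (Mb t))
  simp only [br_LMM, map_smul, Finsupp.smul_apply, Finsupp.add_apply, smul_eq_mul,
    cf4M, cf2M, cf5M] at h
  linear_combination h

end Elems

lemma cast_ne_of_int {n : ℤ} (h : n ≠ 0) : (n : ℂ) ≠ 0 := Int.cast_ne_zero.mpr h

lemma Qzero (X : ℤ → ℤ → ℂ)
    (hQ : ∀ u v m : ℤ, 3 * ((v-u:ℤ):ℂ) * X (u+v) m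
        = ((v-m:ℤ):ℂ) * X u (m-v) + ((m-u:ℤ):ℂ) * X v (m-u)) :
    ∀ s m : ℤ, X s m = 0 := by
  have P : ∀ s m : ℤ, ((3*s-m:ℤ):ℂ) * X s m = ((s-m:ℤ):ℂ) * X 0 (m-s) := by
    intro s m
    have h := hQ 0 s m
    simp only [zero_add, sub_zero] at h
    push_cast at h ⊢
    linear_combination h
  have hxi : ∀ j : ℤ, j ≠ 0 → X 0 j = 0 := by
    intro j hj
    have h1 := P (2*j+1) (3*j+1)
    have h2 := P (4*j+2) (5*j+2)
    have h3 := P (6*j+3) (7*j+3)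
    have hq := hQ (2*j+1) (4*j+2) (7*j+3)
    rw [show (3*j+1) - (2*j+1) = j from by ring] at h1
    rw [show (5*j+2) - (4*j+2) = j from by ring] at h2
    rw [show (7*j+3) - (6*j+3) = j from by ring] at h3
    rw [show (2*j+1) + (4*j+2) = 6*j+3 from by ring,
        show (7*j+3) - (4*j+2) = 3*j+1 from by ring,
        show (7*j+3) - (2*j+1) = 5*j+2 from by ring] at hq
    have key : ((24*j*(2*j+1)^3 : ℤ) : ℂ) * X 0 j = 0 := by
      push_cast at h1 h2 h3 hq ⊢
      linear_combination ((3*(j:ℂ)+1)*(7*j+4)*(11*j+6)) * h1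
        - ((5*(j:ℂ)+2)*(3*j+2)*(11*j+6)) * h2
        + (3*(2*(j:ℂ)+1)*(3*j+2)*(7*j+4)) * h3
        - ((3*(j:ℂ)+2)*(7*j+4)*(11*j+6)) * hq
    have hne : (24*j*(2*j+1)^3 : ℤ) ≠ 0 :=
      mul_ne_zero (mul_ne_zero (by norm_num) hj) (pow_ne_zero _ (by omega))
    exact (mul_eq_zero.mp key).resolve_left (cast_ne_of_int hne)
  have diag0 : X 0 0 = 0 := by
    have h := hQ 1 (-1) 0
    rw [show (1:ℤ) + (-1) = 0 from by norm_num, show (0:ℤ) - (-1) = 1 from by norm_num,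
        show (0:ℤ) - 1 = -1 from by norm_num] at h
    have p1 := P 1 1
    have p2 := P (-1) (-1)
    rw [show (1:ℤ) - 1 = 0 from by norm_num] at p1
    rw [show (-1:ℤ) - (-1) = 0 from by norm_num] at p2
    push_cast at h p1 p2
    -- p1 : 2 * X 1 1 = 0, p2 : -2 * X (-1) (-1) = 0, h : -6 * X 0 0 = -X 1 1 - X (-1) (-1)
    have : (6:ℂ) * X 0 0 = 0 := by linear_combination (-1 : ℂ) * h + (1/2 : ℂ) * p1 - (1/2 : ℂ) * p2
    have h6 : (6:ℂ) ≠ 0 := by norm_num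
    exact (mul_eq_zero.mp this).resolve_left h6
  have diag3 : ∀ s : ℤ, s ≠ 0 → X s (3*s) = 0 := by
    intro s hs
    have h := hQ (-s) (2*s) (3*s)
    rw [show -s + 2*s = s from by ring, show 3*s - 2*s = s from by ring,
        show 3*s - -s = 4*s from by ring] at h
    have p1 := P (-s) s
    rw [show s - -s = 2*s from by ring] at p1
    have p2 := P (2*s) (4*s)
    rw [show 4*s - 2*s = 2*s from by ring] at p2
    rw [hxi (2*s) (by omega), mul_zero] at p1 p2
    have hX1 : X (-s) s = 0 := by
      refine (mul_eq_zero.mp p1).resolve_left (cast_ne_of_int ?_)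
      omega
    have hX2 : X (2*s) (4*s) = 0 := by
      refine (mul_eq_zero.mp p2).resolve_left (cast_ne_of_int ?_)
      omega
    rw [hX1, hX2, mul_zero, mul_zero, add_zero] at h
    have hco : (3 * ((2*s - -s : ℤ):ℂ)) ≠ 0 := by
      refine mul_ne_zero (by norm_num) (cast_ne_of_int ?_)
      omega
    exact (mul_eq_zero.mp h).resolve_left hco
  intro s m
  by_cases h3s : m = 3*s
  · subst h3s
    by_cases hs : s = 0
    · subst hs
      rw [show (3:ℤ)*0 = 0 from by norm_num]
      exact diag0
    · exact diag3 s hs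
  · have p := P s m
    by_cases hms : m = s
    · subst hms
      rw [show ((m - m : ℤ) : ℂ) = 0 from by push_cast; ring, zero_mul] at p
      refine (mul_eq_zero.mp p).resolve_left (cast_ne_of_int ?_)
      omega
    · rw [hxi (m-s) (by omega), mul_zero] at p
      refine (mul_eq_zero.mp p).resolve_left (cast_ne_of_int ?_)
      omega

/-- `A_ω^δ` admits only trivial transposed Poisson structures: any
commutative associative bilinear multiplication satisfying the transposed Poisson
compatibility with the bracket is identically zero. -/
theorem Aod_transposed_poisson_trivial
    (mul : Aod →ₗ[ℂ] Aod →ₗ[ℂ] Aod)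
    (hcomm : ∀ x y, mul x y = mul y x)
    (hassoc : ∀ x y z, mul (mul x y) z = mul x (mul y z))
    (hcompat : ∀ u x y z, (3 : ℂ) • mul u (br x y z) =
      br (mul u x) y z + br x (mul u y) z + br x y (mul u z)) :
    ∀ x y : Aod, mul x y = 0 := by
  classical
  have hB : ∀ u : Aod, ∀ r m : ℤ, (mul u (Lb r)) (true, m) = 0 := by
    intro u
    refine Qzero (fun r m => (mul u (Lb r)) (true, m)) ?_
    intro a b m
    have h := E1 (mul u) (hcompat u) a b 0 m
    simp only [mul_zero, add_zero, sub_zero] at h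
    exact h
  have hC : ∀ u : Aod, ∀ r m : ℤ, (mul u (Mb r)) (false, m) = 0 := by
    intro u
    refine Qzero (fun r m => (mul u (Mb r)) (false, m)) ?_
    intro a b m
    have h := E2 (mul u) (hcompat u) 0 b a m
    rw [show (0:ℤ) + b + a = a + b from by ring] at h
    simp only [mul_zero, zero_add, sub_zero, zero_sub] at h
    linear_combination h
  have hLM : ∀ r s : ℤ, mul (Lb r) (Mb s) = 0 := by
    intro r s
    ext p
    obtain ⟨b, m⟩ := p
    rw [Finsupp.coe_zero, Pi.zero_apply]
    cases b
    · exact hC (Lb r) s m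
    · rw [hcomm]
      exact hB (Mb s) r m
  have hML : ∀ r s : ℤ, mul (Mb r) (Lb s) = 0 := by
    intro r s
    rw [hcomm]
    exact hLM s r
  have hAL : ∀ r s m, (mul (Lb r) (Lb s)) (false, m) = 0 := by
    intro r s m
    have h := E3 (mul (Lb r)) (hcompat (Lb r)) s 1 0 (m+1)
    rw [show m + 1 - 1 - 0 = m from by ring] at h
    simp only [hLM, Finsupp.coe_zero, Pi.zero_apply, mul_zero, add_zero, zero_add] at h
    have h1 : ((1 - 0 : ℤ) : ℂ) = 1 := by norm_num
    rw [h1, one_mul] at h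
    exact h.symm
  have hLL : ∀ r s : ℤ, mul (Lb r) (Lb s) = 0 := by
    intro r s
    ext p
    obtain ⟨b, m⟩ := p
    rw [Finsupp.coe_zero, Pi.zero_apply]
    cases b
    · exact hAL r s m
    · exact hB (Lb r) s m
  have hDM : ∀ r s m, (mul (Mb r) (Mb s)) (true, m) = 0 := by
    intro r s m
    have h := E4 (mul (Mb r)) (hcompat (Mb r)) 0 1 s (m+1)
    rw [show m + 1 - 0 - 1 = m from by ring] at h
    simp only [hML, Finsupp.coe_zero, Pi.zero_apply, mul_zero, add_zero, zero_add] at h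
    have h1 : ((1 - 0 : ℤ) : ℂ) = 1 := by norm_num
    rw [h1, one_mul] at h
    exact h.symm
  have hMM : ∀ r s : ℤ, mul (Mb r) (Mb s) = 0 := by
    intro r s
    ext p
    obtain ⟨b, m⟩ := p
    rw [Finsupp.coe_zero, Pi.zero_apply]
    cases b
    · exact hC (Mb r) s m
    · exact hDM r s m
  intro x y
  induction x using Finsupp.induction_linear with
  | zero => simp
  | add f g hf hg => rw [map_add, LinearMap.add_apply, hf, hg, add_zero]
  | single p c =>
    induction y using Finsupp.induction_linear with
    | zero => simp
    | add f g hf hg => rw [map_add, hf, hg, add_zero]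
    | single q d =>
      obtain ⟨pb, pr⟩ := p
      obtain ⟨qb, qr⟩ := q
      have e1 : (Finsupp.single ((pb : Bool), pr) c : Aod)
          = c • Finsupp.single (pb, pr) 1 := by
        rw [Finsupp.smul_single', mul_one]
      have e2 : (Finsupp.single ((qb : Bool), qr) d : Aod)
          = d • Finsupp.single (qb, qr) 1 := by
        rw [Finsupp.smul_single', mul_one]
      rw [e1, e2]
      simp only [map_smul, LinearMap.smul_apply]
      cases pb <;> cases qb
      · rw [show (Finsupp.single ((false : Bool), pr) (1:ℂ) : Aod) = Lb pr from rfl,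
            show (Finsupp.single ((false : Bool), qr) (1:ℂ) : Aod) = Lb qr from rfl,
            hLL, smul_zero, smul_zero]
      · rw [show (Finsupp.single ((false : Bool), pr) (1:ℂ) : Aod) = Lb pr from rfl,
            show (Finsupp.single ((true : Bool), qr) (1:ℂ) : Aod) = Mb qr from rfl,
            hLM, smul_zero, smul_zero]
      · rw [show (Finsupp.single ((true : Bool), pr) (1:ℂ) : Aod) = Mb pr from rfl,
            show (Finsupp.single ((false : Bool), qr) (1:ℂ) : Aod) = Lb qr from rfl,
            hML, smul_zero, smul_zero]
      · rw [show (Finsupp.single ((true : Bool), pr) (1:ℂ) : Aod) = Mb pr from rfl,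
            show (Finsupp.single ((true : Bool), qr) (1:ℂ) : Aod) = Mb qr from rfl,
            hMM, smul_zero, smul_zero]
end
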